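/- arXiv:nlin/0001072 — 7 statements merged into one kernel-verified Lean document; each statement's English description precedes it below -/
import Mathlib

section
/- Suppose the map T(x,y) = (g(y)+h(x+y), -f(x)-h(x+y)) has an inverse of the form T⁻¹(X,Y) = (G(Y)+H(X+Y), -F(X)-H(X+Y)) with all functions twice differentiable and g', f', h' nonvanishing. Then, writing u = 1/f', v = 1/g', w = 1/h', the identity [v(y)+w(x+y)]u'(x) + [u(x)+w(x+y)]v'(y) = [u(x)+v(y)]w'(x+y) holds for all x, y. -/
/-!
Write `a = f'(x)`, `b = g'(y)`, `c = h'(x + y)`. Differentiating the first component of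
`T⁻¹ ∘ T = id` along the direction `(c, -(a + c))`, in which the argument of `G` is stationary,
gives `H'(g(y) - f(x)) · (ab + bc + ca) = -c`. The left factor depends only on `g(y) - f(x)`,
so it is stationary along the characteristic direction `(b, a)`; differentiating the identity
along that direction and eliminating `H'` leaves a polynomial relation between `a, b, c` and
their derivatives, which is the claimed identity for `u = 1/a`, `v = 1/b`, `w = 1/c`.
-/

-- `hS'` is `hS` differentiated along `(b, a)`: there `a' = a₂ b`, `b' = b₂ a`, `c' = c₂ (a + b)`.
theorem reciprocal_identity_of_mul_eq {K : Type*} [Field K] {a b c a₂ b₂ c₂ k : K}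
    (ha : a ≠ 0) (hb : b ≠ 0) (hc : c ≠ 0)
    (hS : k * (a * b + b * c + a * c) = -c)
    (hS' : k * (a₂ * b * b + a * (b₂ * a) + (b₂ * a * c + b * (c₂ * (a + b)))
      + (a₂ * b * c + a * (c₂ * (a + b)))) = -(c₂ * (a + b))) :
    (1 / b + 1 / c) * (-a₂ / a ^ 2) + (1 / a + 1 / c) * (-b₂ / b ^ 2)
      = (1 / a + 1 / b) * (-c₂ / c ^ 2) := by
  field_simp
  linear_combination -(a₂ * b * b + a * (b₂ * a) + (b₂ * a * c + b * (c₂ * (a + b)))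
      + (a₂ * b * c + a * (c₂ * (a + b)))) * hS + (a * b + b * c + a * c) * hS'

section
variable {𝕜 : Type*} [NontriviallyNormedField 𝕜]

theorem deriv_one_div_eq {c : 𝕜 → 𝕜} {x : 𝕜} (hc : DifferentiableAt 𝕜 c x)
    (hx : c x ≠ 0) :
    deriv (fun y => 1 / c y) x = -deriv c x / c x ^ 2 := by
  simp only [one_div]
  exact deriv_fun_inv'' hc hx

theorem hasDerivAt_comp_sub_along_characteristic {Φ f g : 𝕜 → 𝕜} {x y : 𝕜}
    (hΦ : DifferentiableAt 𝕜 Φ (g y - f x)) (hf : DifferentiableAt 𝕜 f x)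
    (hg : DifferentiableAt 𝕜 g y) :
    HasDerivAt (fun t => Φ (g (y + t * deriv f x) - f (x + t * deriv g y))) 0 0 := by
  have hC := (hg.hasDerivAt.comp_of_eq 0 ((hasDerivAt_mul_const (deriv f x)).const_add y)
    (by simp)).sub (hf.hasDerivAt.comp_of_eq 0 ((hasDerivAt_mul_const (deriv g y)).const_add x)
    (by simp))
  exact (hΦ.hasDerivAt.comp_of_eq 0 hC (by simp)).congr_deriv (by ring)

variable {f g h G H : 𝕜 → 𝕜}

theorem deriv_comp_sub_mul_eq_of_inverse_identity (hf : Differentiable 𝕜 f)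
    (hg : Differentiable 𝕜 g) (hh : Differentiable 𝕜 h) (hG : Differentiable 𝕜 G)
    (hH : Differentiable 𝕜 H) (hinv : ∀ x y, G (-f x - h (x + y)) + H (g y - f x) = x)
    (x y : 𝕜) :
    deriv H (g y - f x) * (deriv f x * deriv g y + deriv g y * deriv h (x + y)
      + deriv f x * deriv h (x + y)) = -deriv h (x + y) := by
  set a := deriv f x
  set c := deriv h (x + y)
  -- along `(c, -(a + c))` the argument of `G` is stationary, so `G'` drops out
  have hX : HasDerivAt (fun t => x + t * c) c 0 := (hasDerivAt_mul_const c).const_add x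
  have hY : HasDerivAt (fun t => y + t * -(a + c)) (-(a + c)) 0 :=
    (hasDerivAt_mul_const _).const_add y
  have hfX := (hf x).hasDerivAt.comp_of_eq 0 hX (by simp)
  have hgY := (hg y).hasDerivAt.comp_of_eq 0 hY (by simp)
  have hhXY := (hh (x + y)).hasDerivAt.comp_of_eq 0 (hX.add hY) (by simp)
  have hGB := (hG (-f x - h (x + y))).hasDerivAt.comp_of_eq 0 (hfX.neg.sub hhXY) (by simp)
  have hHC := (hH (g y - f x)).hasDerivAt.comp_of_eq 0 (hgY.sub hfX) (by simp)
  have hderiv := (hGB.add hHC).unique (hX.congr_of_eventuallyEq (.of_forall fun t => hinv _ _))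
  linear_combination -hderiv

theorem reciprocal_derivs_identity_of_deriv_comp_sub_mul_eq (hf : Differentiable 𝕜 f)
    (hf' : Differentiable 𝕜 (deriv f)) (hg : Differentiable 𝕜 g)
    (hg' : Differentiable 𝕜 (deriv g)) (hh' : Differentiable 𝕜 (deriv h))
    (hH' : Differentiable 𝕜 (deriv H))
    (hfne : ∀ x, deriv f x ≠ 0) (hgne : ∀ y, deriv g y ≠ 0) (hhne : ∀ z, deriv h z ≠ 0)
    (hkey : ∀ x y, deriv H (g y - f x) * (deriv f x * deriv g y + deriv g y * deriv h (x + y)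
      + deriv f x * deriv h (x + y)) = -deriv h (x + y))
    (x y : 𝕜) :
    (1 / deriv g y + 1 / deriv h (x + y)) * deriv (fun x' => 1 / deriv f x') x
      + (1 / deriv f x + 1 / deriv h (x + y)) * deriv (fun y' => 1 / deriv g y') y
      = (1 / deriv f x + 1 / deriv g y) * deriv (fun z' => 1 / deriv h z') (x + y) := by
  rw [deriv_one_div_eq (hf' x) (hfne x), deriv_one_div_eq (hg' y) (hgne y),
    deriv_one_div_eq (hh' (x + y)) (hhne (x + y))]
  have hX : HasDerivAt (fun t => x + t * deriv g y) (deriv g y) 0 :=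
    (hasDerivAt_mul_const _).const_add x
  have hY : HasDerivAt (fun t => y + t * deriv f x) (deriv f x) 0 :=
    (hasDerivAt_mul_const _).const_add y
  have hfX := (hf' x).hasDerivAt.comp_of_eq 0 hX (by simp)
  have hgY := (hg' y).hasDerivAt.comp_of_eq 0 hY (by simp)
  have hhXY := (hh' (x + y)).hasDerivAt.comp_of_eq 0 (hX.add hY) (by simp)
  have hS := ((hfX.mul hgY).add (hgY.mul hhXY)).add (hfX.mul hhXY)
  have hderiv := ((hasDerivAt_comp_sub_along_characteristic (hH' _) (hf x) (hg y)).mul hS).unique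
    (hhXY.neg.congr_of_eventuallyEq (.of_forall fun t => hkey _ _))
  simp only [Function.comp_apply, Pi.add_apply, zero_mul, add_zero, zero_add] at hderiv
  exact reciprocal_identity_of_mul_eq (hfne x) (hgne y) (hhne (x + y)) (hkey x y)
    (by linear_combination hderiv)

end

theorem stmt_1_general (f g h F G H : ℝ → ℝ)
    (hf : Differentiable ℝ f) (hf' : Differentiable ℝ (deriv f))
    (hg : Differentiable ℝ g) (hg' : Differentiable ℝ (deriv g))
    (hh : Differentiable ℝ h) (hh' : Differentiable ℝ (deriv h))
    (hG : Differentiable ℝ G)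
    (hH : Differentiable ℝ H) (hH' : Differentiable ℝ (deriv H))
    (hfne : ∀ x, deriv f x ≠ 0) (hgne : ∀ y, deriv g y ≠ 0) (hhne : ∀ z, deriv h z ≠ 0)
    (hLI : Function.LeftInverse
      (fun P : ℝ × ℝ => (G P.2 + H (P.1 + P.2), -F P.1 - H (P.1 + P.2)))
      (fun p : ℝ × ℝ => (g p.2 + h (p.1 + p.2), -f p.1 - h (p.1 + p.2)))) :
    ∀ x y : ℝ,
      (1 / deriv g y + 1 / deriv h (x + y)) * deriv (fun x' => 1 / deriv f x') x
      + (1 / deriv f x + 1 / deriv h (x + y)) * deriv (fun y' => 1 / deriv g y') y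
      = (1 / deriv f x + 1 / deriv g y) * deriv (fun z' => 1 / deriv h z') (x + y) := by
  have hinv : ∀ x y, G (-f x - h (x + y)) + H (g y - f x) = x := fun x y => by
    have hfst := congrArg Prod.fst (hLI (x, y))
    dsimp only at hfst
    rwa [show g y + h (x + y) + (-f x - h (x + y)) = g y - f x by ring] at hfst
  exact reciprocal_derivs_identity_of_deriv_comp_sub_mul_eq hf hf' hg hg' hh' hH' hfne hgne hhne
    (deriv_comp_sub_mul_eq_of_inverse_identity hf hg hh hG hH hinv)

/-- If the map `T(x,y) = (g(y)+h(x+y), -f(x)-h(x+y))` has an inverse of the form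
`T⁻¹(X,Y) = (G(Y)+H(X+Y), -F(X)-H(X+Y))` with all functions twice differentiable and
`f', g', h'` nonvanishing, then `u = 1/f'`, `v = 1/g'`, `w = 1/h'` satisfy
`(v(y)+w(x+y))u'(x) + (u(x)+w(x+y))v'(y) = (u(x)+v(y))w'(x+y)`. -/
theorem stmt_1 (f g h F G H : ℝ → ℝ)
    (hf : Differentiable ℝ f) (hf' : Differentiable ℝ (deriv f))
    (hg : Differentiable ℝ g) (hg' : Differentiable ℝ (deriv g))
    (hh : Differentiable ℝ h) (hh' : Differentiable ℝ (deriv h))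
    (hF : Differentiable ℝ F) (hF' : Differentiable ℝ (deriv F))
    (hG : Differentiable ℝ G) (hG' : Differentiable ℝ (deriv G))
    (hH : Differentiable ℝ H) (hH' : Differentiable ℝ (deriv H))
    (hfne : ∀ x, deriv f x ≠ 0) (hgne : ∀ y, deriv g y ≠ 0) (hhne : ∀ z, deriv h z ≠ 0)
    (hLI : Function.LeftInverse
      (fun P : ℝ × ℝ => (G P.2 + H (P.1 + P.2), -F P.1 - H (P.1 + P.2)))
      (fun p : ℝ × ℝ => (g p.2 + h (p.1 + p.2), -f p.1 - h (p.1 + p.2))))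
    (hRI : Function.RightInverse
      (fun P : ℝ × ℝ => (G P.2 + H (P.1 + P.2), -F P.1 - H (P.1 + P.2)))
      (fun p : ℝ × ℝ => (g p.2 + h (p.1 + p.2), -f p.1 - h (p.1 + p.2)))) :
    ∀ x y : ℝ,
      (1 / deriv g y + 1 / deriv h (x + y)) * deriv (fun x' => 1 / deriv f x') x
      + (1 / deriv f x + 1 / deriv h (x + y)) * deriv (fun y' => 1 / deriv g y') y
      = (1 / deriv f x + 1 / deriv g y) * deriv (fun z' => 1 / deriv h z') (x + y) :=
  stmt_1_general f g h F G H hf hf' hg hg' hh hh' hG hH hH' hfne hgne hhne hLI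
end

section
/- The map T : (x,y) ↦ (X,Y) with X = ν/y + λ/(x+y) and Y = -μ/x - λ/(x+y), where λ + μ + ν = 0 and λμν ≠ 0, is an involution on its domain of definition: applying T twice returns (x,y). -/
/-!
Under `λ + μ + ν = 0` both components of `T(x,y)` have numerator `νx - μy` over a common
denominator, so `T(x,y) = c • (x,y)` with `c = (νx - μy)/(xy(x+y))`: the map `T` sends every
point to a multiple of itself. Since `T` is homogeneous of degree `-1`, that is
`T(c • p) = c⁻¹ • T p`, we get `T(T p) = c⁻¹ • c • p = p` as soon as `c ≠ 0`.
-/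

noncomputable def mapT (lam mu nu : ℝ) (p : ℝ × ℝ) : ℝ × ℝ :=
  (nu / p.2 + lam / (p.1 + p.2), -mu / p.1 - lam / (p.1 + p.2))

section

variable {lam mu nu : ℝ}

theorem mapT_smul (c : ℝ) (p : ℝ × ℝ) : mapT lam mu nu (c • p) = c⁻¹ • mapT lam mu nu p := by
  simp only [mapT, Prod.smul_fst, Prod.smul_snd, Prod.smul_mk, smul_eq_mul, ← mul_add,
    div_eq_mul_inv, mul_inv]
  ext <;> ring

theorem mapT_eq_smul (hsum : lam + mu + nu = 0) {p : ℝ × ℝ}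
    (h₁ : p.1 ≠ 0) (h₂ : p.2 ≠ 0) (h₁₂ : p.1 + p.2 ≠ 0) :
    mapT lam mu nu p = ((nu * p.1 - mu * p.2) / (p.1 * p.2 * (p.1 + p.2))) • p := by
  obtain rfl : lam = -mu - nu := by linarith
  ext <;> simp only [mapT, Prod.smul_fst, Prod.smul_snd, smul_eq_mul] <;> field_simp <;> ring

theorem mapT_mapT (hsum : lam + mu + nu = 0) {p : ℝ × ℝ}
    (h₁ : p.1 ≠ 0) (h₂ : p.2 ≠ 0) (h₁₂ : p.1 + p.2 ≠ 0) (hT : (mapT lam mu nu p).1 ≠ 0) :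
    mapT lam mu nu (mapT lam mu nu p) = p := by
  set c := (nu * p.1 - mu * p.2) / (p.1 * p.2 * (p.1 + p.2))
  have hTp : mapT lam mu nu p = c • p := mapT_eq_smul hsum h₁ h₂ h₁₂
  have hc : c ≠ 0 := by
    rw [hTp, Prod.smul_fst, smul_eq_mul] at hT
    exact left_ne_zero_of_mul hT
  rw [hTp, mapT_smul, hTp, smul_smul, inv_mul_cancel₀ hc, one_smul]

end

theorem stmt_4_general (lam mu nu : ℝ)
    (hsum : lam + mu + nu = 0) (x y : ℝ)
    (hx : x ≠ 0) (hy : y ≠ 0) (hxy : x + y ≠ 0)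
    (hX : nu / y + lam / (x + y) ≠ 0) :
    nu / (-mu / x - lam / (x + y))
      + lam / ((nu / y + lam / (x + y)) + (-mu / x - lam / (x + y))) = x
    ∧ -mu / (nu / y + lam / (x + y))
      - lam / ((nu / y + lam / (x + y)) + (-mu / x - lam / (x + y))) = y :=
  Prod.ext_iff.mp (mapT_mapT (p := (x, y)) hsum hx hy hxy hX)

/-- The map `T(x,y) = (ν/y + λ/(x+y), -μ/x - λ/(x+y))`, with `λ+μ+ν = 0` and
`λμν ≠ 0`, is an involution: applying it twice returns `(x,y)`
(on the domain where all denominators are nonzero). -/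
theorem stmt_4 (lam mu nu : ℝ) (hlam : lam ≠ 0) (hmu : mu ≠ 0) (hnu : nu ≠ 0)
    (hsum : lam + mu + nu = 0) (x y : ℝ)
    (hx : x ≠ 0) (hy : y ≠ 0) (hxy : x + y ≠ 0)
    (hX : nu / y + lam / (x + y) ≠ 0)
    (hY : -mu / x - lam / (x + y) ≠ 0)
    (hXY : (nu / y + lam / (x + y)) + (-mu / x - lam / (x + y)) ≠ 0) :
    nu / (-mu / x - lam / (x + y))
      + lam / ((nu / y + lam / (x + y)) + (-mu / x - lam / (x + y))) = x
    ∧ -mu / (nu / y + lam / (x + y))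
      - lam / ((nu / y + lam / (x + y)) + (-mu / x - lam / (x + y))) = y :=
  stmt_4_general lam mu nu hsum x y hx hy hxy hX
end

section
/- Let r(p) = r₂p² + r₁p + r₀ and suppose g, h : ℝ → ℝ satisfy g' = αh + r₁gh - 2r₀h² and h' = 2r₂gh - r₁h² + R₁h. Then the function y ↦ r₂g(y)² + R₁g(y) + R₀ - r₁g(y)h(y) + r₀h(y)² - αh(y) has zero derivative. -/
/-- If `g' = αh + r₁gh - 2r₀h²` and `h' = 2r₂gh - r₁h² + R₁h`, then the function
`y ↦ r₂g² + R₁g + R₀ - r₁gh + r₀h² - αh` has zero derivative. -/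
theorem stmt_5 (r2 r1 r0 R1 R0 a : ℝ) (g h : ℝ → ℝ)
    (hg : Differentiable ℝ g) (hh : Differentiable ℝ h)
    (hg' : ∀ y, deriv g y = a * h y + r1 * g y * h y - 2 * r0 * (h y) ^ 2)
    (hh' : ∀ y, deriv h y = 2 * r2 * g y * h y - r1 * (h y) ^ 2 + R1 * h y) :
    ∀ y, deriv (fun y' => r2 * (g y') ^ 2 + R1 * g y' + R0
        - r1 * g y' * h y' + r0 * (h y') ^ 2 - a * h y') y = 0 := by
  intro y
  have Hg := (hg y).hasDerivAt
  have Hh := (hh y).hasDerivAt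
  have : HasDerivAt (fun y' => r2 * (g y') ^ 2 + R1 * g y' + R0
      - r1 * g y' * h y' + r0 * (h y') ^ 2 - a * h y')
      (r2 * (2 * g y * deriv g y) + R1 * deriv g y
        - (r1 * deriv g y * h y + r1 * g y * deriv h y)
        + r0 * (2 * h y * deriv h y) - a * deriv h y) y := by
    have h1 : HasDerivAt (fun y' => (g y') ^ 2) (2 * g y * deriv g y) y := by
      have := Hg.mul Hg; simpa [pow_two, two_mul, Pi.mul_def] using this.congr_deriv (by ring)
    have h2 : HasDerivAt (fun y' => (h y') ^ 2) (2 * h y * deriv h y) y := by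
      have := Hh.mul Hh; simpa [pow_two, two_mul, Pi.mul_def] using this.congr_deriv (by ring)
    have h3 : HasDerivAt (fun y' => r1 * g y' * h y')
        (r1 * deriv g y * h y + r1 * g y * deriv h y) y := by
      simpa [mul_assoc, Pi.mul_def] using ((Hg.const_mul r1).mul Hh)
    exact ((((((h1.const_mul r2).add (Hg.const_mul R1)).add_const R0).sub h3).add
      (h2.const_mul r0)).sub (Hh.const_mul a))
  rw [this.deriv, hg' y, hh' y]
  ring
end

section
/- Under the first integral r₂g² + R₁g + R₀ - r₁gh + r₀h² = αh, the function h satisfying h' = 2r₂gh - r₁h² + R₁h obeys the single ODE (h')² = (r₁² - 4r₂r₀)h⁴ + (4αr₂ - 2R₁r₁)h³ + (R₁² - 4r₂R₀)h². -/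
/-- Under the first integral `r₂g² + R₁g + R₀ - r₁gh + r₀h² = αh`, a solution of
`h' = 2r₂gh - r₁h² + R₁h` obeys
`(h')² = (r₁²-4r₂r₀)h⁴ + (4αr₂-2R₁r₁)h³ + (R₁²-4r₂R₀)h²`. -/
theorem stmt_6 (r2 r1 r0 R1 R0 a : ℝ) (g h : ℝ → ℝ)
    (hh' : ∀ y, deriv h y = 2 * r2 * g y * h y - r1 * (h y) ^ 2 + R1 * h y)
    (halg : ∀ y, r2 * (g y) ^ 2 + R1 * g y + R0 - r1 * g y * h y + r0 * (h y) ^ 2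
        = a * h y) :
    ∀ y, (deriv h y) ^ 2
      = (r1 ^ 2 - 4 * r2 * r0) * (h y) ^ 4 + (4 * a * r2 - 2 * R1 * r1) * (h y) ^ 3
        + (R1 ^ 2 - 4 * r2 * R0) * (h y) ^ 2 := by
  intro y
  rw [hh' y]
  linear_combination (4 * r2 * (h y) ^ 2) * (halg y)
end

section
/- In a Jordan triple system, if the operator M_a (defined by M_a(c) = {aca}) is invertible and a⁻¹ = M_a⁻¹(a), then M_{a⁻¹} = M_a⁻¹. -/
/-- A Jordan triple system: a real vector space with a trilinear product satisfying
`{abc} = {cba}` and `{ab{cde}} - {cd{abe}} = {{cba}de} - {c{bad}e}`. -/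
structure JordanTriple (J : Type*) [AddCommGroup J] [Module ℝ J] where
  t : J → J → J → J
  add_left : ∀ a a' b c, t (a + a') b c = t a b c + t a' b c
  smul_left : ∀ (r : ℝ) a b c, t (r • a) b c = r • t a b c
  add_mid : ∀ a b b' c, t a (b + b') c = t a b c + t a b' c
  smul_mid : ∀ a (r : ℝ) b c, t a (r • b) c = r • t a b c
  add_right : ∀ a b c c', t a b (c + c') = t a b c + t a b c'
  smul_right : ∀ a b (r : ℝ) c, t a b (r • c) = r • t a b c
  symm : ∀ a b c, t a b c = t c b a
  jordan : ∀ a b c d e,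
    t a b (t c d e) - t c d (t a b e) = t (t c b a) d e - t c (t b a d) e

namespace JordanTriple

variable {J : Type*} [AddCommGroup J] [Module ℝ J] (S : JordanTriple J)

/-- The middle slot as an additive hom. -/
private def midHom (a c : J) : J →+ J :=
  AddMonoidHom.mk' (fun b => S.t a b c) (fun b b' => S.add_mid a b b' c)

private lemma lem1 (x y z : J) : S.t (S.t x y x) y z = S.t x (S.t y x y) z := by
  have h := S.jordan x y x y z
  rw [sub_self] at h
  exact sub_eq_zero.mp h.symm

private lemma k1 (x y z : J) : S.t x y (S.t x z x) = S.t x (S.t y x z) x := by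
  have e1 := S.jordan x y x z x
  rw [S.symm (S.t x y x) z x] at e1
  have e2 := S.jordan x z x y x
  rw [S.symm (S.t x z x) y x, S.symm z x y] at e2
  set P := S.t x y (S.t x z x) with hPdef
  set A := S.t x z (S.t x y x) with hAdef
  set B := S.t x (S.t y x z) x with hBdef
  -- e1 : P - A = A - B,  e2 : A - P = P - B
  have e1' : P + B = A + A := sub_eq_sub_iff_add_eq_add.mp e1
  have e2' : A + B = P + P := sub_eq_sub_iff_add_eq_add.mp e2
  have hPA : P = A := by
    have h3 : (3 : ℝ) • P = (3 : ℝ) • A := by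
      have hsum : P + P + P = A + A + A := by
        calc P + P + P = A + B + P := by rw [← e2']
          _ = (P + B) + A := by abel
          _ = (A + A) + A := by rw [e1']
          _ = A + A + A := by abel
      calc (3 : ℝ) • P = P + P + P := by module
        _ = A + A + A := hsum
        _ = (3 : ℝ) • A := by module
    have h4 := congrArg (fun v => (3 : ℝ)⁻¹ • v) h3
    simp only [smul_smul] at h4
    norm_num at h4
    exact h4
  have hBA : B = A := by
    have h := e1
    rw [hPA, sub_self] at h
    exact (sub_eq_zero.mp h.symm).symm
  rw [hPA, hBA]

private lemma r2 (x y z w : J) :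
    S.t (S.t x y x) z w
      = S.t x (S.t y x z) w + S.t x (S.t y x z) w - S.t (S.t x z x) y w := by
  have h1 := S.jordan x y x z w
  have h2 := S.jordan x z x y w
  rw [S.symm z x y] at h2
  set u := S.t x y (S.t x z w) with hu
  set v := S.t x z (S.t x y w) with hv
  set p := S.t (S.t x y x) z w with hp
  set q := S.t x (S.t y x z) w with hq
  set r := S.t (S.t x z x) y w with hr
  -- h1 : u - v = p - q,  h2 : v - u = r - q
  have h1' : u + q = p + v := sub_eq_sub_iff_add_eq_add.mp h1
  have h2' : v + q = r + u := sub_eq_sub_iff_add_eq_add.mp h2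
  have key : p + (r + u) = (q + q - r) + (r + u) := by
    calc p + (r + u) = p + (v + q) := by rw [← h2']
      _ = (p + v) + q := by abel
      _ = (u + q) + q := by rw [← h1']
      _ = (q + q - r) + (r + u) := by abel
  exact add_right_cancel key

private lemma k3 (x y z : J) :
    S.t y (S.t x z x) y
      = S.t y x (S.t y x z) + S.t y x (S.t y x z) - S.t z x (S.t y x y) := by
  have h := S.jordan z x y x y
  rw [S.symm z x y, S.symm (S.t y x z) x y] at h
  -- h : t z x (t y x y) - t y x (t y x z) = t y x (t y x z) - t y (t x z x) y
  have h' := sub_eq_sub_iff_add_eq_add.mp h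
  exact eq_sub_of_add_eq (by rw [add_comm]; exact h')

/-- The fundamental formula `Q_{Q_x y} = Q_x Q_y Q_x`. -/
private lemma ff (x y z : J) :
    S.t (S.t x y x) z (S.t x y x) = S.t x (S.t y (S.t x z x) y) x := by
  have h := S.r2 x y z (S.t x y x)
  rw [S.k1 x (S.t y x z) y] at h
  have h2 : S.t (S.t x z x) y (S.t x y x) = S.t x (S.t (S.t y x y) x z) x := by
    rw [S.symm (S.t x z x) y (S.t x y x), S.lem1 x y (S.t x z x)]
    exact S.k1 x (S.t y x y) z
  rw [h2] at h
  rw [h]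
  have hinner : S.t (S.t y x z) x y + S.t (S.t y x z) x y - S.t (S.t y x y) x z
      = S.t y (S.t x z x) y := by
    rw [S.symm (S.t y x z) x y, S.symm (S.t y x y) x z]
    exact (S.k3 x y z).symm
  rw [← hinner]
  show S.midHom x x (S.t (S.t y x z) x y) + S.midHom x x (S.t (S.t y x z) x y)
      - S.midHom x x (S.t (S.t y x y) x z)
      = S.midHom x x (S.t (S.t y x z) x y + S.t (S.t y x z) x y - S.t (S.t y x y) x z)
  rw [map_sub, map_add]

end JordanTriple

/-- If `M_a : c ↦ {aca}` is invertible and `a⁻¹ = M_a⁻¹(a)`, then `M_{a⁻¹} = M_a⁻¹`. -/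
theorem stmt_7 {J : Type*} [AddCommGroup J] [Module ℝ J] (S : JordanTriple J)
    (a ai : J) (hbij : Function.Bijective (fun c => S.t a c a))
    (hai : S.t a ai a = a) :
    (∀ c, S.t ai (S.t a c a) ai = c) ∧ (∀ c, S.t a (S.t ai c ai) a = c) := by
  have key : ∀ c, S.t ai (S.t a c a) ai = c := by
    intro c
    apply hbij.1
    show S.t a (S.t ai (S.t a c a) ai) a = S.t a c a
    have h := S.ff a ai c
    rw [hai] at h
    exact h.symm
  refine ⟨key, fun c => ?_⟩
  obtain ⟨d, hd⟩ := hbij.2 c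
  simp only at hd
  rw [← hd, key d]
end

section
/- In a Jordan triple system, if M_a is invertible, then {a a⁻¹ b} = b for all b ∈ J, where a⁻¹ = M_a⁻¹(a). -/
/-- If `M_a` is invertible and `a⁻¹ = M_a⁻¹(a)`, then `{a a⁻¹ b} = b` for all `b`. -/
theorem stmt_9 {J : Type*} [AddCommGroup J] [Module ℝ J] (S : JordanTriple J)
    (a ai : J) (hbij : Function.Bijective (fun c => S.t a c a))
    (hai : S.t a ai a = a) :
    ∀ b, S.t a ai b = b := by
  intro b
  obtain ⟨c, rfl⟩ := hbij.2 b
  have e1 := S.jordan a ai a c a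
  have e2 := S.jordan a c a ai a
  rw [hai] at e1 e2
  rw [S.symm (S.t a c a) ai a] at e2
  rw [show S.t ai a c = S.t c a ai from S.symm ai a c] at e1
  -- e1 : L - M = M - X,  e2 : M - L = L - X
  linear_combination (norm := module) ((1:ℝ)/3) • e1 - ((1:ℝ)/3) • e2
end

section
/- In a Jordan triple system, if a, b, and a+b are invertible (i.e., M_a, M_b, M_{a+b} invertible) and a⁻¹ + b⁻¹ is invertible, then (a⁻¹ + b⁻¹)⁻¹ = {a(a+b)⁻¹b} (the harmonic mean formula). -/
namespace JordanTripleAux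

variable {J : Type*} [AddCommGroup J] [Module ℝ J] (S : JordanTriple J)

lemma sub_mid (a b b' c : J) : S.t a (b - b') c = S.t a b c - S.t a b' c := by
  have h := S.add_mid a (b - b') b' c
  rw [sub_add_cancel] at h
  rw [eq_sub_iff_add_eq, ← h]

/-- (E1): `{Q_x y, z, x} = {x, {y x z}, x}`. -/
lemma E1 (x y z : J) : S.t (S.t x y x) z x = S.t x (S.t y x z) x := by
  have h1 := S.jordan x y x z x
  have h2 := S.jordan x z x y x
  rw [S.symm x y (S.t x z x), S.symm x z (S.t x y x)] at h1
  rw [S.symm x z (S.t x y x), S.symm x y (S.t x z x), S.symm z x y] at h2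
  -- h1 : t(txzx) y x - t(txyx) z x = t(txyx) z x - t x (tyxz) x
  -- h2 : t(txyx) z x - t(txzx) y x = t(txzx) y x - t x (tyxz) x
  have key : (3:ℝ) • (S.t (S.t x y x) z x) = (3:ℝ) • (S.t x (S.t y x z) x) := by
    linear_combination (norm := module) (-2:ℝ) • h1 - h2
  exact smul_right_injective J (by norm_num : (3:ℝ) ≠ 0) key

/-- (C): `{Q_x y, z, w} + {Q_x z, y, w} = {x {yxz} w} + {x {zxy} w}`. -/
lemma C (x y z w : J) :
    S.t (S.t x y x) z w + S.t (S.t x z x) y w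
      = S.t x (S.t y x z) w + S.t x (S.t z x y) w := by
  have h1 := S.jordan x y x z w
  have h2 := S.jordan x z x y w
  linear_combination (norm := module) -h1 - h2

/-- (D'): `{Q_y x, x, z} = {y, Q_x y, z}`. -/
lemma Dp (x y z : J) : S.t (S.t y x y) x z = S.t y (S.t x y x) z := by
  have h := S.jordan y x y x z
  linear_combination (norm := module) -h

/-- (D''): linearized D'. -/
lemma Dpp (x y w z : J) :
    S.t (S.t y x w) x z + S.t (S.t w x y) x z
      = S.t y (S.t x w x) z + S.t w (S.t x y x) z := by
  have h1 := S.jordan y x w x z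
  have h2 := S.jordan w x y x z
  linear_combination (norm := module) -h1 - h2

/-- Fundamental formula: `Q_{Q_x y} = Q_x Q_y Q_x`. -/
lemma FF (x y z : J) :
    S.t (S.t x y x) z (S.t x y x) = S.t x (S.t y (S.t x z x) y) x := by
  set u := S.t x y x with hu
  set W := S.t y x z with hW
  have h1 : S.t u z u + S.t (S.t x z x) y u = S.t x W u + S.t x W u := by
    have h := C S x y z u
    rw [S.symm z x y] at h
    linear_combination (norm := module) h
  have h2 : S.t x W u = S.t x (S.t y x W) x := by
    rw [S.symm x W u, hu, E1 S x y W]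
  have h3 : S.t y x W + S.t y x W
      = S.t y (S.t x z x) y + S.t y (S.t x y x) z := by
    have h := Dpp S x y z y
    -- t (t y x z) x y + t (t z x y) x y = t y (t x z x) y + t z (t x y x) y
    rw [S.symm (S.t y x z) x y, S.symm (S.t z x y) x y, S.symm z x y,
      S.symm z (S.t x y x) y] at h
    linear_combination (norm := module) h
  have h3' : S.t x (S.t y x W) x + S.t x (S.t y x W) x
      = S.t x (S.t y (S.t x z x) y) x + S.t x (S.t y (S.t x y x) z) x := by
    have := congrArg (fun m => S.t x m x) h3
    simpa [S.add_mid] using this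
  have h4 : S.t (S.t x z x) y u = S.t x (S.t y (S.t x y x) z) x := by
    calc S.t (S.t x z x) y u = S.t u y (S.t x z x) := S.symm _ _ _
      _ = S.t x (S.t y x y) (S.t x z x) := by rw [hu, Dp S y x (S.t x z x)]
      _ = S.t (S.t x z x) (S.t y x y) x := S.symm _ _ _
      _ = S.t x (S.t z x (S.t y x y)) x := E1 S x z (S.t y x y)
      _ = S.t x (S.t (S.t y x y) x z) x := by rw [S.symm z x (S.t y x y)]
      _ = S.t x (S.t y (S.t x y x) z) x := by rw [Dp S x y z]
  linear_combination (norm := module) h1 + (2:ℝ) • h2 + h3' - h4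

section Inverse

variable {S}
variable {x y : J} (hQ : Function.Bijective (fun c => S.t x c x)) (hxy : S.t x y x = x)

include hQ hxy

lemma inv_L1 (z : J) : S.t y x z = z := by
  have h := E1 S x y z
  rw [hxy] at h
  exact (hQ.injective h).symm

lemma inv_L2 (z : J) : S.t x y z = z := by
  obtain ⟨w, hw⟩ := hQ.surjective z
  simp only at hw
  subst hw
  calc S.t x y (S.t x w x) = S.t (S.t x w x) y x := S.symm _ _ _
    _ = S.t x (S.t w x y) x := E1 S x w y
    _ = S.t x (S.t y x w) x := by rw [S.symm w x y]
    _ = S.t x w x := by rw [inv_L1 hQ hxy w]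

lemma inv_QQ1 (z : J) : S.t y (S.t x z x) y = z := by
  have h := FF S x y z
  rw [hxy] at h
  exact (hQ.injective h).symm

lemma inv_QQ2 (w : J) : S.t x (S.t y w y) x = w := by
  obtain ⟨z, hz⟩ := hQ.surjective w
  simp only at hz
  subst hz
  rw [inv_QQ1 hQ hxy z]

lemma inv_Qyx : S.t y x y = y := by
  apply hQ.injective
  show S.t x (S.t y x y) x = S.t x y x
  rw [inv_QQ2 hQ hxy x, hxy]

end Inverse

end JordanTripleAux

/-- Harmonic mean formula: if `a`, `b`, `a+b` and `a⁻¹+b⁻¹` are invertible then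
`(a⁻¹ + b⁻¹)⁻¹ = {a(a+b)⁻¹b}`. -/
theorem stmt_14 {J : Type*} [AddCommGroup J] [Module ℝ J] (S : JordanTriple J)
    (a b ai bi ci di : J)
    (hba : Function.Bijective (fun c => S.t a c a)) (hai : S.t a ai a = a)
    (hbb : Function.Bijective (fun c => S.t b c b)) (hbi : S.t b bi b = b)
    (hbab : Function.Bijective (fun c => S.t (a + b) c (a + b)))
    (hci : S.t (a + b) ci (a + b) = a + b)
    (hbs : Function.Bijective (fun c => S.t (ai + bi) c (ai + bi)))
    (hdi : S.t (ai + bi) di (ai + bi) = ai + bi) :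
    di = S.t a ci b := by
  open JordanTripleAux in
  -- basic inverse facts
  have hce : ∀ z, S.t ci (a + b) z = z := inv_L1 hbab hci
  have hec : ∀ z, S.t (a + b) ci z = z := inv_L2 hbab hci
  have haai : ∀ z, S.t ai a z = z := inv_L1 hba hai
  have hbbi : ∀ z, S.t bi b z = z := inv_L1 hbb hbi
  have hQaiQa : ∀ z, S.t ai (S.t a z a) ai = z := inv_QQ1 hba hai
  have hQbiQb : ∀ z, S.t bi (S.t b z b) bi = z := inv_QQ1 hbb hbi
  have hQaia : S.t ai a ai = ai := inv_Qyx hba hai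
  have hQbib : S.t bi b bi = bi := inv_Qyx hbb hbi
  -- v = {a ci b}
  have hv1 : S.t a ci b = a - S.t a ci a := by
    have h : S.t a ci a + S.t a ci b = a := by
      rw [← S.add_right a ci a b, S.symm a ci (a + b)]
      exact hec a
    linear_combination (norm := module) h
  have hv2 : S.t a ci b = b - S.t b ci b := by
    have h : S.t a ci b + S.t b ci b = b := by
      rw [← S.add_left a b ci b]
      exact hec b
    linear_combination (norm := module) h
  have hQaiv : S.t ai (S.t a ci b) ai = ai - ci := by
    rw [hv1, JordanTripleAux.sub_mid, hQaia, hQaiQa ci]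
  have hQbiv : S.t bi (S.t a ci b) bi = bi - ci := by
    rw [hv2, JordanTripleAux.sub_mid, hQbib, hQbiQb ci]
  have hciabi : S.t ci a bi = bi - ci := by
    have h : S.t ci a bi + S.t ci b bi = bi := by
      rw [← S.add_mid ci a b bi]
      exact hce bi
    have h2 : S.t ci b bi = ci := by rw [S.symm ci b bi]; exact hbbi ci
    rw [h2] at h
    linear_combination (norm := module) h
  have hmidQ : S.t ai (S.t a ci a) bi = S.t ci a bi := by
    have h := JordanTripleAux.Dpp S a ai ci bi
    -- t (t ai a ci) a bi + t (t ci a ai) a bi = t ai (t a ci a) bi + t ci (t a ai a) bi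
    rw [haai ci, S.symm ci a ai, haai ci, hai] at h
    linear_combination (norm := module) -h
  have hmidv : S.t ai (S.t a ci b) bi = ci := by
    rw [hv1, JordanTripleAux.sub_mid, haai bi, hmidQ, hciabi]
    abel
  have hs : S.t (ai + bi) (S.t a ci b) (ai + bi) = ai + bi := by
    rw [S.add_left, S.add_right, S.add_right, hQaiv, hQbiv, hmidv,
      S.symm bi (S.t a ci b) ai, hmidv]
    abel
  exact hbs.injective (hdi.trans hs.symm)
end
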